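/- arXiv:1309.2137 — 2 statements merged into one kernel-verified Lean document; each statement's English description precedes it below -/
import Mathlib

section
/- The 18-uniform morphism h on {0,1,2} given by h(0)=012021020102120210, h(1)=120102101210201021, h(2)=201210212021012102 is square-free, and so is the 17-uniform morphism h' given by h'(0)=01202120102120210, h'(1)=12010201210201021, h'(2)=20121012021012102. -/
/-!
Let `h` be `k`-uniform, injective and synchronizing, and suppose that `h` maps square-free words
of length at most `3` to square-free words. Let `xx` occur in `h w` at position `k j + r`, `r < k`.
If `r + 2|x| ≤ 3k`, the square lies in the image of the factor of `w` of length `3` starting at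
`j`. Otherwise `|x| > k`, so some aligned block `h a` lies in one half of the square and reappears
`|x|` positions away; synchronization forces `k ∣ |x|`, say `|x| = k m`. By injectivity, the
blocks of the first half that the square covers entirely agree with those `m` letters later. Let
`a, b, c` be the letters at positions `j, j + m, j + 2m` of `w`. If `a = b` or `b = c`, then `w`
contains a square; otherwise `abc` is square-free, but the tail of `h a` agrees with that of `h b`
and the head of `h b` with that of `h c`, so `h (abc)` has a square of length `k` at `r`.
-/

def SqFreeWord {α : Type*} (w : List α) : Prop :=
  ∀ x : List α, x ≠ [] → ¬ (x ++ x) <:+: w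

def hmorph : Fin 3 → List (Fin 3)
  | 0 => [0,1,2,0,2,1,0,2,0,1,0,2,1,2,0,2,1,0]
  | 1 => [1,2,0,1,0,2,1,0,1,2,1,0,2,0,1,0,2,1]
  | 2 => [2,0,1,2,1,0,2,1,2,0,2,1,0,1,2,1,0,2]

def hmorph' : Fin 3 → List (Fin 3)
  | 0 => [0,1,2,0,2,1,2,0,1,0,2,1,2,0,2,1,0]
  | 1 => [1,2,0,1,0,2,0,1,2,1,0,2,0,1,0,2,1]
  | 2 => [2,0,1,2,1,0,1,2,0,2,1,0,1,2,1,0,2]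

variable {α : Type*}

def HasSquareAt (W : List α) (p L : ℕ) : Prop :=
  0 < L ∧ p + 2 * L ≤ W.length ∧ ∀ t < L, W[p + t]? = W[p + L + t]?

theorem sqFreeWord_iff_forall_not_hasSquareAt {W : List α} :
    SqFreeWord W ↔ ∀ p L, ¬ HasSquareAt W p L := by
  constructor
  · rintro hW p L ⟨hL, hlen, hper⟩
    set x := (W.drop p).take L
    have hx : x.length = L := by simp [x]; omega
    have hxx : x ++ x = (W.drop p).take (2 * L) := by
      refine List.ext_getElem? fun i => ?_
      rcases lt_or_ge i L with hi | hi
      · rw [List.getElem?_append_left (by omega)]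
        simp [x, hi, show i < 2 * L by omega]
      · rw [List.getElem?_append_right (by omega), hx]
        by_cases hi2 : i < 2 * L
        · simp only [x, List.getElem?_take, List.getElem?_drop, if_pos hi2,
            if_pos (show i - L < L by omega), hper _ (show i - L < L by omega)]
          congr 1; omega
        · simp [x, hi2, show ¬ i - L < L by omega]
    refine hW x (List.ne_nil_of_length_pos (by omega)) ?_
    rw [hxx]
    exact (List.take_prefix _ _).isInfix.trans (List.drop_suffix _ _).isInfix
  · rintro hW x hx hinf
    obtain ⟨p, hlen, hget⟩ := List.infix_iff_getElem?.mp hinf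
    refine hW p x.length ⟨List.length_pos_iff.mpr hx, by simp at hlen; omega, fun t ht => ?_⟩
    have h1 := hget t (by simp; omega)
    have h2 := hget (x.length + t) (by simp; omega)
    rw [List.getElem_append_left ht] at h1
    rw [List.getElem_append_right (by omega)] at h2
    simp only [Nat.add_sub_cancel_left] at h2
    rw [add_comm p, h1, ← h2]
    congr 1; omega

instance [DecidableEq α] (W : List α) (p L : ℕ) : Decidable (HasSquareAt W p L) :=
  inferInstanceAs (Decidable (_ ∧ _ ∧ _))

instance [DecidableEq α] (W : List α) : Decidable (SqFreeWord W) :=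
  decidable_of_iff (∀ p < W.length, ∀ L < W.length, ¬ HasSquareAt W p L) <| by
    rw [sqFreeWord_iff_forall_not_hasSquareAt]
    refine ⟨fun hW p L hsq => ?_, fun hW p _ L _ => hW p L⟩
    have := hsq.1
    have := hsq.2.1
    exact hW p (by omega) L (by omega) hsq

theorem HasSquareAt.drop {W : List α} {q p L : ℕ} (hsq : HasSquareAt W (q + p) L) :
    HasSquareAt (W.drop q) p L := by
  obtain ⟨hL, hlen, hper⟩ := hsq
  refine ⟨hL, by simp; omega, fun t ht => ?_⟩
  simp only [List.getElem?_drop, ← add_assoc]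
  exact hper t ht

theorem HasSquareAt.take {W : List α} {p L : ℕ} (hsq : HasSquareAt W p L) {n : ℕ}
    (hn : p + 2 * L ≤ n) : HasSquareAt (W.take n) p L := by
  obtain ⟨hL, hlen, hper⟩ := hsq
  refine ⟨hL, by simp; omega, fun t ht => ?_⟩
  simp only [List.getElem?_take, if_pos (show p + t < n by omega),
    if_pos (show p + L + t < n by omega)]
  exact hper t ht

theorem SqFreeWord.infix {V W : List α} (hW : SqFreeWord W) (hVW : V <:+: W) : SqFreeWord V :=
  fun x hx hxx => hW x hx (hxx.trans hVW)

theorem sqFreeWord_triple {a b c : α} (hab : a ≠ b) (hbc : b ≠ c) : SqFreeWord [a, b, c] := by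
  rw [sqFreeWord_iff_forall_not_hasSquareAt]
  rintro p L ⟨hL, hlen, hper⟩
  simp only [List.length_cons, List.length_nil] at hlen
  obtain rfl : L = 1 := by omega
  have hp : p ≤ 1 := by omega
  have := hper 0 one_pos
  interval_cases p <;> simp_all

theorem forall_of_length_le_three {P : List α → Prop} (h0 : P []) (h1 : ∀ a, P [a])
    (h2 : ∀ a b, P [a, b]) (h3 : ∀ a b c, P [a, b, c]) : ∀ z : List α, z.length ≤ 3 → P z
  | [], _ => h0
  | [a], _ => h1 a
  | [a, b], _ => h2 a b
  | [a, b, c], _ => h3 a b c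
  | _ :: _ :: _ :: _ :: _, hz => by simp at hz; omega

section Uniform

variable {h : α → List α} {k : ℕ}

theorem length_flatten_map_of_uniform (hk : ∀ a, (h a).length = k) (w : List α) :
    (w.map h).flatten.length = k * w.length := by
  induction w with
  | nil => simp
  | cons a w ih => simp [hk, ih, Nat.mul_succ, add_comm]

theorem drop_flatten_map_of_uniform (hk : ∀ a, (h a).length = k) (w : List α) (j : ℕ) :
    (w.map h).flatten.drop (k * j) = ((w.drop j).map h).flatten := by
  induction j generalizing w with
  | zero => simp
  | succ j ih =>
    cases w with
    | nil => simp
    | cons a w =>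
      rw [List.map_cons, List.flatten_cons, List.drop_succ_cons, ← ih, Nat.mul_succ, add_comm,
        ← hk a, List.drop_length_add_append]

theorem take_flatten_map_of_uniform (hk : ∀ a, (h a).length = k) (w : List α) (j : ℕ) :
    (w.map h).flatten.take (k * j) = ((w.take j).map h).flatten := by
  induction j generalizing w with
  | zero => simp
  | succ j ih =>
    cases w with
    | nil => simp
    | cons a w =>
      rw [List.map_cons, List.flatten_cons, List.take_succ_cons, List.map_cons,
        List.flatten_cons, ← ih, Nat.mul_succ, add_comm, ← hk a, List.take_length_add_append]

theorem getElem?_flatten_map_of_uniform (hk : ∀ a, (h a).length = k) {w : List α} {j t : ℕ}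
    {a : α} (ha : w[j]? = some a) (ht : t < k) :
    (w.map h).flatten[k * j + t]? = (h a)[t]? := by
  obtain ⟨hj, rfl⟩ := List.getElem?_eq_some_iff.mp ha
  rw [← List.getElem?_drop, drop_flatten_map_of_uniform hk, List.drop_eq_getElem_cons hj,
    List.map_cons, List.flatten_cons, List.getElem?_append_left (by rw [hk]; exact ht)]

theorem not_hasSquareAt_flatten_map_of_short (hk : ∀ a, (h a).length = k)
    (hshort : ∀ z : List α, z.length ≤ 3 → SqFreeWord z → SqFreeWord (z.map h).flatten)
    {w : List α} (hw : SqFreeWord w) {j r L : ℕ} (hrL : r + 2 * L ≤ 3 * k) :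
    ¬ HasSquareAt (w.map h).flatten (k * j + r) L := by
  intro hsq
  set z := (w.drop j).take 3
  have hz : SqFreeWord (z.map h).flatten := hshort z (by simp [z])
    (hw.infix ((List.take_prefix _ _).isInfix.trans (List.drop_suffix _ _).isInfix))
  have hzW : (z.map h).flatten = ((w.map h).flatten.drop (k * j)).take (k * 3) := by
    rw [drop_flatten_map_of_uniform hk, take_flatten_map_of_uniform hk]
  rw [sqFreeWord_iff_forall_not_hasSquareAt, hzW] at hz
  exact hz r L (hsq.drop.take (by omega))

def Synchronizing (h : α → List α) (k : ℕ) : Prop :=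
  ∀ a b c, ∀ r < k, 0 < r → ((h b ++ h c).drop r).take k ≠ h a

theorem Synchronizing.dvd_of_take_drop_eq (hsync : Synchronizing h k)
    (hk : ∀ a, (h a).length = k) {w : List α} {q : ℕ} {a : α} (hq : q + k ≤ k * w.length)
    (hocc : ((w.map h).flatten.drop q).take k = h a) : k ∣ q := by
  rw [Nat.dvd_iff_mod_eq_zero]
  by_contra hr
  have hk0 : 0 < k := Nat.pos_of_ne_zero (by rintro rfl; simp at hq hr; omega)
  set j := q / k
  set r := q % k
  have hqjr : k * j + r = q := Nat.div_add_mod q k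
  have hrk : r < k := Nat.mod_lt q hk0
  have hj : j + 1 < w.length := Nat.lt_of_mul_lt_mul_left (a := k) (by rw [Nat.mul_succ]; omega)
  obtain ⟨b, c, rest, hw⟩ : ∃ b c rest, w.drop j = b :: c :: rest := by
    rw [List.drop_eq_getElem_cons (by omega), List.drop_eq_getElem_cons hj]
    exact ⟨_, _, _, rfl⟩
  have hbc : (((h b ++ h c) ++ (rest.map h).flatten).drop r).take k =
      ((h b ++ h c).drop r).take k := by
    rw [List.drop_append_of_le_length (by simp [hk]; omega),
      List.take_append_of_le_length (by simp [hk]; omega)]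
  refine hsync a b c r hrk (Nat.pos_of_ne_zero hr) ?_
  rw [← hbc, ← hocc, ← hqjr, ← List.drop_drop, drop_flatten_map_of_uniform hk, hw]
  simp only [List.map_cons, List.flatten_cons, List.append_assoc]

theorem Synchronizing.dvd_of_getElem?_eq (hsync : Synchronizing h k)
    (hk : ∀ a, (h a).length = k) {w : List α} {q q' : ℕ} (hq : k ∣ q)
    (hqW : q + k ≤ k * w.length) (hq'W : q' + k ≤ k * w.length)
    (hcopy : ∀ t < k, (w.map h).flatten[q + t]? = (w.map h).flatten[q' + t]?) : k ∣ q' := by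
  obtain ⟨j, rfl⟩ := hq
  obtain rfl | hk0 := Nat.eq_zero_or_pos k
  · simp_all
  have hj : j < w.length := Nat.lt_of_mul_lt_mul_left (a := k) (by omega)
  have ha : w[j]? = some w[j] := List.getElem?_eq_getElem hj
  refine hsync.dvd_of_take_drop_eq hk hq'W (a := w[j]) (List.ext_getElem? fun t => ?_)
  rcases lt_or_ge t k with ht | ht
  · rw [List.getElem?_take, if_pos ht, List.getElem?_drop, ← hcopy t ht,
      getElem?_flatten_map_of_uniform hk ha ht]
  · rw [List.getElem?_eq_none (by simp; omega), List.getElem?_eq_none (by rw [hk]; exact ht)]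

theorem Synchronizing.dvd_of_hasSquareAt (hsync : Synchronizing h k)
    (hk : ∀ a, (h a).length = k) {w : List α} {p L : ℕ}
    (hsq : HasSquareAt (w.map h).flatten p L) (hlong : 3 * k < p % k + 2 * L) : k ∣ L := by
  obtain ⟨hL, hlen, hper⟩ := hsq
  rw [length_flatten_map_of_uniform hk] at hlen
  have hk0 : 0 < k := Nat.pos_of_ne_zero (by rintro rfl; omega)
  obtain ⟨q, hkq, hpq, hqL⟩ : ∃ q, k ∣ q ∧ p ≤ q ∧ q + 2 * k ≤ p + 2 * L := by
    have hpk := Nat.div_add_mod p k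
    rcases Nat.eq_zero_or_pos (p % k) with hr | hr
    · exact ⟨p, Nat.dvd_of_mod_eq_zero hr, le_rfl, by omega⟩
    · have := Nat.mod_lt p hk0
      exact ⟨k * (p / k + 1), dvd_mul_right _ _, by rw [Nat.mul_succ]; omega,
        by rw [Nat.mul_succ]; omega⟩
  by_cases hfirst : q + k ≤ p + L
  · -- the aligned block at `q` lies in the first half of the square, so it recurs at `q + L`
    refine (Nat.dvd_add_right hkq).mp
      (hsync.dvd_of_getElem?_eq hk (w := w) hkq (by omega) (by omega) fun t ht => ?_)
    have := hper (q - p + t) (by omega)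
    rwa [show p + (q - p + t) = q + t by omega, show p + L + (q - p + t) = q + L + t by omega]
      at this
  · -- the aligned block at `q + k` lies in the second half, so it recurs at `q + k - L`
    have hkqk : k ∣ q + k := (Nat.dvd_add_left (dvd_refl k)).mpr hkq
    have hdvd : k ∣ q + k - L :=
      hsync.dvd_of_getElem?_eq hk (w := w) hkqk (by omega) (by omega) fun t ht => by
        have := hper (q + k - L - p + t) (by omega)
        rw [show p + (q + k - L - p + t) = q + k - L + t by omega,
          show p + L + (q + k - L - p + t) = q + k + t by omega] at this
        exact this.symm
    have := Nat.dvd_sub hkqk hdvd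
    rwa [show q + k - (q + k - L) = L by omega] at this

theorem getElem?_eq_of_hasSquareAt (hk : ∀ a, (h a).length = k) (hinj : h.Injective)
    {w : List α} {j r m i : ℕ} (hsq : HasSquareAt (w.map h).flatten (k * j + r) (k * m))
    (hri : r ≤ k * i) (him : i < m) : w[j + i]? = w[j + i + m]? := by
  obtain ⟨hL, hlen, hper⟩ := hsq
  rw [length_flatten_map_of_uniform hk] at hlen
  have hk0 : 0 < k := Nat.pos_of_ne_zero (by rintro rfl; simp at hL)
  have him' : k * i + k ≤ k * m := by rw [← Nat.mul_succ]; exact Nat.mul_le_mul_left k him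
  have hjm : j + i + m < w.length :=
    Nat.lt_of_mul_lt_mul_left (a := k) (by rw [mul_add, mul_add]; omega)
  have ha := List.getElem?_eq_getElem (show j + i < w.length by omega)
  have hb := List.getElem?_eq_getElem hjm
  rw [ha, hb, Option.some_inj, ← hinj.eq_iff]
  refine List.ext_getElem? fun t => ?_
  rcases lt_or_ge t k with ht | ht
  · rw [← getElem?_flatten_map_of_uniform hk ha ht, ← getElem?_flatten_map_of_uniform hk hb ht]
    have := hper (k * i + t - r) (by omega)
    rwa [show k * j + r + (k * i + t - r) = k * (j + i) + t by rw [mul_add]; omega,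
      show k * j + r + k * m + (k * i + t - r) = k * (j + i + m) + t by
        rw [mul_add, mul_add]; omega] at this
  · rw [List.getElem?_eq_none (by rw [hk]; exact ht), List.getElem?_eq_none (by rw [hk]; exact ht)]

theorem hasSquareAt_append_of_hasSquareAt (hk : ∀ a, (h a).length = k) {w : List α}
    {j r m : ℕ} {a b c : α} (hsq : HasSquareAt (w.map h).flatten (k * j + r) (k * m))
    (hrk : r < k) (ha : w[j]? = some a) (hb : w[j + m]? = some b)
    (hc : w[j + 2 * m]? = some c) : HasSquareAt (h a ++ h b ++ h c) r k := by
  obtain ⟨hL, -, hper⟩ := hsq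
  have hkm : k ≤ k * m := Nat.le_mul_of_pos_right k (Nat.pos_of_mul_pos_left hL)
  refine ⟨by omega, by simp [hk]; omega, fun t ht => ?_⟩
  rcases lt_or_ge (r + t) k with hrt | hrt
  · have hleft : (h a ++ h b ++ h c)[r + t]? = (h a)[r + t]? := by
      rw [List.append_assoc, List.getElem?_append_left (by rw [hk]; omega)]
    have hright : (h a ++ h b ++ h c)[r + k + t]? = (h b)[r + t]? := by
      rw [List.append_assoc, List.getElem?_append_right (by rw [hk]; omega),
        List.getElem?_append_left (by rw [hk, hk]; omega), hk]
      congr 1; omega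
    rw [hleft, hright, ← getElem?_flatten_map_of_uniform hk ha hrt,
      ← getElem?_flatten_map_of_uniform hk hb hrt]
    have := hper t (by omega)
    rwa [show k * j + r + t = k * j + (r + t) by omega,
      show k * j + r + k * m + t = k * (j + m) + (r + t) by rw [mul_add]; omega] at this
  · have hleft : (h a ++ h b ++ h c)[r + t]? = (h b)[r + t - k]? := by
      rw [List.append_assoc, List.getElem?_append_right (by rw [hk]; omega),
        List.getElem?_append_left (by rw [hk, hk]; omega), hk]
    have hright : (h a ++ h b ++ h c)[r + k + t]? = (h c)[r + t - k]? := by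
      rw [List.getElem?_append_right (by simp [hk]; omega)]
      simp only [List.length_append, hk]
      congr 1; omega
    rw [hleft, hright, ← getElem?_flatten_map_of_uniform hk hb (show r + t - k < k by omega),
      ← getElem?_flatten_map_of_uniform hk hc (show r + t - k < k by omega)]
    have := hper (k * m + t - k) (by omega)
    rwa [show k * j + r + (k * m + t - k) = k * (j + m) + (r + t - k) by rw [mul_add]; omega,
      show k * j + r + k * m + (k * m + t - k) = k * (j + 2 * m) + (r + t - k) by
        rw [mul_add, mul_left_comm]; omega] at this

theorem not_hasSquareAt_flatten_map_mul (hk : ∀ a, (h a).length = k) (hinj : h.Injective)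
    (hshort : ∀ z : List α, z.length ≤ 3 → SqFreeWord z → SqFreeWord (z.map h).flatten)
    {w : List α} (hw : SqFreeWord w) {j r m : ℕ} (hrk : r < k) :
    ¬ HasSquareAt (w.map h).flatten (k * j + r) (k * m) := by
  intro hsq
  obtain ⟨hL, hlen, -⟩ := id hsq
  rw [length_flatten_map_of_uniform hk] at hlen
  have hm : 0 < m := Nat.pos_of_mul_pos_left hL
  have hjn : k * (j + 2 * m) + r ≤ k * w.length := by rw [mul_add, mul_left_comm]; omega
  have hinner (i : ℕ) (hi : 0 < i) (him : i < m) : w[j + i]? = w[j + i + m]? :=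
    getElem?_eq_of_hasSquareAt hk hinj hsq ((Nat.le_mul_of_pos_right k hi).trans' hrk.le) him
  rw [sqFreeWord_iff_forall_not_hasSquareAt] at hw
  by_cases hab : w[j]? = w[j + m]?
  · refine hw j m ⟨hm, Nat.le_of_mul_le_mul_left (by omega) (by omega : 0 < k), fun i hi => ?_⟩
    rcases Nat.eq_zero_or_pos i with rfl | hi0
    · exact hab
    · rw [add_right_comm]; exact hinner i hi0 hi
  have hr : 0 < r := Nat.pos_of_ne_zero fun hr0 =>
    hab (getElem?_eq_of_hasSquareAt hk hinj hsq (i := 0) (by omega) hm)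
  have hjn' : j + 2 * m < w.length := Nat.lt_of_mul_lt_mul_left (a := k) (by omega)
  by_cases hbc : w[j + m]? = w[j + 2 * m]?
  · refine hw (j + 1) m ⟨hm, by omega, fun i hi => ?_⟩
    rcases lt_or_ge (i + 1) m with hi1 | hi1
    · rw [show j + 1 + i = j + (i + 1) by omega, show j + 1 + m + i = j + (i + 1) + m by omega]
      exact hinner (i + 1) (by omega) hi1
    · rwa [show j + 1 + i = j + m by omega, show j + 1 + m + i = j + 2 * m by omega]
  obtain ⟨a, ha⟩ : ∃ a, w[j]? = some a := ⟨_, List.getElem?_eq_getElem (by omega)⟩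
  obtain ⟨b, hb⟩ : ∃ b, w[j + m]? = some b := ⟨_, List.getElem?_eq_getElem (by omega)⟩
  obtain ⟨c, hc⟩ : ∃ c, w[j + 2 * m]? = some c := ⟨_, List.getElem?_eq_getElem hjn'⟩
  have habc : SqFreeWord [a, b, c] := sqFreeWord_triple
    (by rintro rfl; exact hab (ha.trans hb.symm)) (by rintro rfl; exact hbc (hb.trans hc.symm))
  have := hshort [a, b, c] (by simp) habc
  rw [sqFreeWord_iff_forall_not_hasSquareAt] at this
  exact this r k (by simpa using hasSquareAt_append_of_hasSquareAt hk hsq hrk ha hb hc)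

theorem SqFreeWord.flatten_map_of_synchronizing (hk : ∀ a, (h a).length = k)
    (hinj : h.Injective) (hsync : Synchronizing h k)
    (hshort : ∀ z : List α, z.length ≤ 3 → SqFreeWord z → SqFreeWord (z.map h).flatten)
    {w : List α} (hw : SqFreeWord w) : SqFreeWord (w.map h).flatten := by
  rw [sqFreeWord_iff_forall_not_hasSquareAt]
  intro p L hsq
  have hk0 : 0 < k := Nat.pos_of_ne_zero fun hk0 => by
    obtain ⟨hL, hlen, -⟩ := hsq
    rw [length_flatten_map_of_uniform hk, hk0] at hlen
    omega
  by_cases hshort_sq : p % k + 2 * L ≤ 3 * k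
  · rw [← Nat.div_add_mod p k] at hsq
    exact not_hasSquareAt_flatten_map_of_short hk hshort hw hshort_sq hsq
  · obtain ⟨m, rfl⟩ := hsync.dvd_of_hasSquareAt hk hsq (by omega)
    rw [← Nat.div_add_mod p k] at hsq
    exact not_hasSquareAt_flatten_map_mul hk hinj hshort hw (Nat.mod_lt p hk0) hsq

end Uniform

theorem stmt15 :
    (∀ w : List (Fin 3), SqFreeWord w → SqFreeWord (w.map hmorph).flatten) ∧
    (∀ w : List (Fin 3), SqFreeWord w → SqFreeWord (w.map hmorph').flatten) := by
  constructor
  · intro w hw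
    refine hw.flatten_map_of_synchronizing (k := 18) (by decide) (by decide)
      (by unfold Synchronizing; decide +kernel) ?_
    apply forall_of_length_le_three <;> decide +kernel
  · intro w hw
    refine hw.flatten_map_of_synchronizing (k := 17) (by decide) (by decide)
      (by unfold Synchronizing; decide +kernel) ?_
    apply forall_of_length_le_three <;> decide +kernel
end

section
/- Among the square-free ternary words of length 8 beginning with 01, the word u = 01021201 admits exactly three distinct square-free shuffles of the form u ⧢_β u, namely 0102120102012101, 0102120102101201 and 0102101201021201, while the word u = 01201021 admits exactly one, namely 0102101201020121. -/
def condShuffle {α : Type*} : List Bool → List α → List α → List α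
  | [], _, _ => []
  | (false :: β), (a :: u), v => a :: condShuffle β u v
  | (false :: _), [], _ => []
  | (true :: β), u, (a :: v) => a :: condShuffle β u v
  | (true :: _), _, [] => []

section Squares

variable {α : Type*} {w : List α}

def HasSquareSuffix (w : List α) : Prop :=
  ∃ x : List α, x ≠ [] ∧ x ++ x <:+ w

theorem hasSquareSuffix_iff_exists_mem_tails :
    HasSquareSuffix w ↔ ∃ x ∈ w.tails, x ≠ [] ∧ x ++ x <:+ w :=
  ⟨fun ⟨x, hx, hsuf⟩ =>
      ⟨x, (List.mem_tails _ _).2 ((List.suffix_append x x).trans hsuf), hx, hsuf⟩,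
    fun ⟨x, _, hx, hsuf⟩ => ⟨x, hx, hsuf⟩⟩

instance [DecidableEq α] : DecidablePred (HasSquareSuffix : List α → Prop) :=
  fun _ => decidable_of_iff _ hasSquareSuffix_iff_exists_mem_tails.symm

theorem SqFreeWord.of_infix {v : List α} (h : v <:+: w) (hw : SqFreeWord w) : SqFreeWord v :=
  fun x hx hinf => hw x hx (hinf.trans h)

theorem SqFreeWord.not_hasSquareSuffix (hw : SqFreeWord w) : ¬ HasSquareSuffix w :=
  fun ⟨x, hx, hsuf⟩ => hw x hx hsuf.isInfix

theorem SqFreeWord.append_iff {l : List α} (hw : SqFreeWord w) (hl : l.length ≤ 1) :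
    SqFreeWord (w ++ l) ↔ ¬ HasSquareSuffix (w ++ l) := by
  refine ⟨SqFreeWord.not_hasSquareSuffix, fun hsuf x hx hinf => ?_⟩
  match l, hl with
  | [], _ => exact hw x hx (by simpa using hinf)
  | [_], _ =>
    rcases List.infix_concat_iff.1 hinf with h | h
    exacts [hsuf ⟨x, hx, h⟩, hw x hx h]

end Squares

theorem condShuffle_append_singleton {α : Type*} :
    ∀ (β : List Bool) (b : Bool) (u v : List α),
      ∃ l : List α, l.length ≤ 1 ∧ condShuffle (β ++ [b]) u v = condShuffle β u v ++ l
  | [], false, [], _ => ⟨[], by simp [condShuffle]⟩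
  | [], false, a :: _, _ => ⟨[a], by simp [condShuffle]⟩
  | [], true, _, [] => ⟨[], by simp [condShuffle]⟩
  | [], true, _, a :: _ => ⟨[a], by simp [condShuffle]⟩
  | false :: _, _, [], _ => ⟨[], by simp [condShuffle]⟩
  | false :: β, b, a :: u, v => by
    obtain ⟨l, hl, h⟩ := condShuffle_append_singleton β b u v
    exact ⟨l, hl, by simp [condShuffle, h]⟩
  | true :: _, _, _, [] => ⟨[], by simp [condShuffle]⟩
  | true :: β, b, u, a :: v => by
    obtain ⟨l, hl, h⟩ := condShuffle_append_singleton β b u v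
    exact ⟨l, hl, by simp [condShuffle, h]⟩

theorem sqFreeWord_condShuffle_append_singleton_iff {α : Type*} (β : List Bool) (b : Bool)
    (u v : List α) :
    SqFreeWord (condShuffle (β ++ [b]) u v) ↔
      SqFreeWord (condShuffle β u v) ∧ ¬ HasSquareSuffix (condShuffle (β ++ [b]) u v) := by
  obtain ⟨l, hl, h⟩ := condShuffle_append_singleton β b u v
  rw [h]
  exact ⟨fun hw => ⟨hw.of_infix (List.prefix_append _ _).isInfix, hw.not_hasSquareSuffix⟩,
    fun ⟨hw, hsuf⟩ => (hw.append_iff hl).2 hsuf⟩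

section StepwiseWords

variable {α : Type*} (letters : List α) (step : List α → α → Prop)
  [∀ w a, Decidable (step w a)]

def stepwiseWords : ℕ → List (List α)
  | 0 => [[]]
  | n + 1 => (stepwiseWords n).flatMap fun w => (letters.filter (step w ·)).map (w ++ [·])

variable {letters step}

theorem mem_stepwiseWords {P : List α → Prop} (hletters : ∀ a, a ∈ letters) (hnil : P [])
    (hstep : ∀ w a, P (w ++ [a]) ↔ P w ∧ step w a) {n : ℕ} {w : List α} :
    w ∈ stepwiseWords letters step n ↔ w.length = n ∧ P w := by
  induction n generalizing w with
  | zero => cases w <;> simp [stepwiseWords, hnil]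
  | succ n ih =>
    rcases w.eq_nil_or_concat' with rfl | ⟨w, a, rfl⟩
    · simp [stepwiseWords]
    · simp only [stepwiseWords, List.mem_flatMap, List.mem_map, List.mem_filter, ih, hstep,
        decide_eq_true_eq, List.length_append, List.length_singleton, Nat.add_right_cancel_iff]
      constructor
      · rintro ⟨w', ⟨hlen, hw'⟩, b, ⟨-, hb⟩, heq⟩
        obtain ⟨rfl, h⟩ := List.append_inj' heq rfl
        obtain rfl : b = a := by simpa using h
        exact ⟨hlen, hw', hb⟩
      · rintro ⟨hlen, hw, ha⟩
        exact ⟨w, ⟨hlen, hw⟩, a, ⟨hletters a, ha⟩, rfl⟩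

end StepwiseWords

section SqFreeShuffles

variable {α : Type*} [DecidableEq α]

def sqFreeShuffles (u v : List α) (m n : ℕ) : List (List α) :=
  ((stepwiseWords [false, true] (fun β b => ¬ HasSquareSuffix (condShuffle (β ++ [b]) u v))
    (m + n)).filter (·.count false = m)).map (condShuffle · u v)

theorem setOf_sqFreeWord_condShuffle_eq (u v : List α) (m n : ℕ) :
    {w | ∃ β : List Bool, β.count false = m ∧ β.count true = n ∧ condShuffle β u v = w ∧
      SqFreeWord w} = {w | w ∈ sqFreeShuffles u v m n} := by
  ext w
  simp only [sqFreeShuffles, Set.mem_ofPred_eq, List.mem_map, List.mem_filter,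
    mem_stepwiseWords (P := fun β => SqFreeWord (condShuffle β u v))
      (by decide : ∀ b : Bool, b ∈ [false, true]) (by simp [condShuffle, SqFreeWord])
      (sqFreeWord_condShuffle_append_singleton_iff · · u v),
    decide_eq_true_eq]
  constructor
  · rintro ⟨β, hm, hn, rfl, hw⟩
    exact ⟨β, ⟨⟨by rw [← List.count_false_add_count_true, hm, hn], hw⟩, hm⟩, rfl⟩
  · rintro ⟨β, ⟨⟨hlen, hw⟩, hm⟩, rfl⟩
    have := List.count_false_add_count_true β
    exact ⟨β, hm, by omega, rfl, hw⟩

end SqFreeShuffles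

theorem stmt18 :
    {w : List (Fin 3) | ∃ β : List Bool, β.count false = 8 ∧ β.count true = 8 ∧
        condShuffle β ([0,1,0,2,1,2,0,1] : List (Fin 3)) ([0,1,0,2,1,2,0,1] : List (Fin 3)) = w ∧ SqFreeWord w}
      = {[0,1,0,2,1,2,0,1,0,2,0,1,2,1,0,1], [0,1,0,2,1,2,0,1,0,2,1,0,1,2,0,1], [0,1,0,2,1,0,1,2,0,1,0,2,1,2,0,1]} ∧
    {w : List (Fin 3) | ∃ β : List Bool, β.count false = 8 ∧ β.count true = 8 ∧
        condShuffle β ([0,1,2,0,1,0,2,1] : List (Fin 3)) ([0,1,2,0,1,0,2,1] : List (Fin 3)) = w ∧ SqFreeWord w}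
      = {[0,1,0,2,1,0,1,2,0,1,0,2,0,1,2,1]} := by
  simp only [setOf_sqFreeWord_condShuffle_eq, ← List.coe_toFinset, ← Finset.coe_singleton,
    ← Finset.coe_insert, Finset.coe_inj]
  constructor <;> decide +kernel
end
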